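/- Let M_{111} be a nonzero real number, let s > 0 and α = M_{111}/|M_{111}|. The four particles with velocities s·(α,1,1), s·(−α,−1,1), s·(−α,1,−1), s·(α,−1,−1), each with weight |M_{111}|/(4s³), satisfy ∑_j w_j v_{x,j} v_{y,j} v_{z,j} = M_{111}, and moreover all of their contributions to the moments M_{100}, M_{010}, M_{001}, M_{110}, M_{101}, M_{011}, M_{120}, M_{210}, M_{102}, M_{201}, M_{012}, M_{021} vanish (∑_j w_j v_{x,j}^{k_x} v_{y,j}^{k_y} v_{z,j}^{k_z} = 0 for each of these index triples), while each weight is positive. -/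
import Mathlib


theorem K3_quadruplet (M111 s : ℝ) (hM : M111 ≠ 0) (hs : 0 < s) :
    let α : ℝ := M111 / |M111|
    let vx : Fin 4 → ℝ := ![s * α, s * (-α), s * (-α), s * α]
    let vy : Fin 4 → ℝ := ![s * 1, s * (-1), s * 1, s * (-1)]
    let vz : Fin 4 → ℝ := ![s * 1, s * 1, s * (-1), s * (-1)]
    let w : Fin 4 → ℝ := fun _ => |M111| / (4 * s ^ 3)
    (∑ j, w j * vx j * vy j * vz j) = M111 ∧
    (∀ k ∈ ([(1,0,0), (0,1,0), (0,0,1), (1,1,0), (1,0,1), (0,1,1),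
             (1,2,0), (2,1,0), (1,0,2), (2,0,1), (0,1,2), (0,2,1)] : List (ℕ × ℕ × ℕ)),
      (∑ j, w j * vx j ^ k.1 * vy j ^ k.2.1 * vz j ^ k.2.2) = 0) ∧
    (∀ j, 0 < w j) := by
  intro α vx vy vz w
  have habs : |M111| ≠ 0 := abs_ne_zero.mpr hM
  have hsne : s ≠ 0 := hs.ne'
  refine ⟨?_, ?_, fun j => ?_⟩
  · show (∑ j, w j * vx j * vy j * vz j) = M111
    simp only [Fin.sum_univ_four, vx, vy, vz, w, α, Matrix.cons_val_zero,
      Matrix.cons_val_one, Matrix.head_cons, Matrix.cons_val_two, Matrix.tail_cons,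
      Matrix.cons_val_three]
    field_simp
    ring
  · intro k hk
    fin_cases hk <;>
      simp only [Fin.sum_univ_four, vx, vy, vz, w, α, Matrix.cons_val_zero,
        Matrix.cons_val_one, Matrix.head_cons, Matrix.cons_val_two, Matrix.tail_cons,
        Matrix.cons_val_three] <;>
      ring
  · show 0 < |M111| / (4 * s ^ 3)
    positivity
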